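/- arXiv:2211.12121 — 2 statements merged into one kernel-verified Lean document; each statement's English description precedes it below -/
import Mathlib

section
/- Let V be a finite-dimensional subspace of a Hilbert space H with orthogonal projection P, and let B, B' be bounded self-adjoint operators on H such that PBP restricted to V is invertible with smallest eigenvalue λ > 0. If ‖B' − B‖ ≤ λ/2, then PB'P restricted to V is also invertible, and ‖P − (PBP)⁺(PB'P)‖ ≤ 1/2. -/
/-!
On `V = range P` the quadratic form of `P B P` is bounded below by `λ ‖v‖²`, and hence that of
`P B' P` by `(λ - ‖B' - B‖) ‖v‖² ≥ λ/2 ‖v‖²`. Such a lower bound makes `P C P` injective on `V`,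
and then the Penrose equations force any pseudoinverse `X` of `P C P` to invert it on `V`:
`X (P C P) = P = (P C P) X`, with `‖X‖ ≤ λ⁻¹` when the bound is `λ`. Finally
`P - (P B P)⁺ (P B' P) = (P B P)⁺ P (B - B') P`, of norm at most `λ⁻¹ · λ/2`.
-/

open ContinuousLinearMap RealInnerProductSpace

/-- The four Penrose conditions characterizing the Moore–Penrose pseudoinverse. -/
def IsPseudoinverse {H : Type*} [NormedAddCommGroup H] [InnerProductSpace ℝ H]
    [CompleteSpace H] (A Ap : H →L[ℝ] H) : Prop :=
  A ∘L Ap ∘L A = A ∧ Ap ∘L A ∘L Ap = Ap ∧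
    ContinuousLinearMap.adjoint (A ∘L Ap) = A ∘L Ap ∧
    ContinuousLinearMap.adjoint (Ap ∘L A) = Ap ∘L A

/-- An orthogonal projection: idempotent and self-adjoint. -/
def IsOrthProj {H : Type*} [NormedAddCommGroup H] [InnerProductSpace ℝ H]
    [CompleteSpace H] (P : H →L[ℝ] H) : Prop :=
  P ∘L P = P ∧ ContinuousLinearMap.adjoint P = P

/-- `lam` is the smallest eigenvalue of the restriction of `A` to the subspace `V`:
it is an eigenvalue attained on `V` and a lower bound for the quadratic form on `V`. -/
def IsSmallestEigenvalueOn {H : Type*} [NormedAddCommGroup H] [InnerProductSpace ℝ H]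
    [CompleteSpace H] (A : H →L[ℝ] H) (V : Submodule ℝ H) (lam : ℝ) : Prop :=
  (∀ v ∈ V, lam * ‖v‖ ^ 2 ≤ ⟪v, A v⟫) ∧ ∃ v ∈ V, v ≠ 0 ∧ A v = lam • v

section

variable {H : Type*} [NormedAddCommGroup H] [InnerProductSpace ℝ H]

def IsCoerciveOn (A : H →L[ℝ] H) (V : Submodule ℝ H) (μ : ℝ) : Prop :=
  ∀ v ∈ V, μ * ‖v‖ ^ 2 ≤ ⟪v, A v⟫

variable {P A Ap C : H →L[ℝ] H} {μ : ℝ}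

lemma eq_zero_of_comp_eq_zero_of_ker_le {S : H →L[ℝ] H} (hker : ∀ x, A x = 0 → P x = 0)
    (hAS : A ∘L S = 0) (hPS : P ∘L S = S) : S = 0 := by
  ext x
  rw [← hPS, comp_apply, zero_apply]
  exact hker _ (by simpa using DFunLike.congr_fun hAS x)

lemma IsCoerciveOn.apply_eq_zero (hA : IsCoerciveOn A P.range μ) (hμ : 0 < μ)
    (hAP : A ∘L P = A) {x : H} (hx : A x = 0) : P x = 0 := by
  have hAPx : A (P x) = 0 := by rw [← comp_apply, hAP, hx]
  have hle := hA (P x) ⟨x, rfl⟩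
  rw [hAPx, inner_zero_right] at hle
  have : ‖P x‖ ^ 2 ≤ 0 := nonpos_of_mul_nonpos_right hle hμ
  simpa using this

variable [CompleteSpace H]

namespace IsOrthProj

lemma isStarProjection (hP : IsOrthProj P) : IsStarProjection P := ⟨hP.1, hP.2⟩

lemma opNorm_le_one (hP : IsOrthProj P) : ‖P‖ ≤ 1 := IsStarProjection.norm_le P hP.isStarProjection

lemma isSelfAdjoint (hP : IsOrthProj P) : IsSelfAdjoint P := hP.2

lemma apply_eq_self_of_mem_range (hP : IsOrthProj P) {v : H} (hv : v ∈ P.range) : P v = v := by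
  obtain ⟨w, rfl⟩ := hv
  exact DFunLike.congr_fun hP.1 w

lemma comp_conj (hP : IsOrthProj P) : P ∘L (P ∘L C ∘L P) = P ∘L C ∘L P := by
  rw [← comp_assoc, hP.1]

lemma conj_comp (hP : IsOrthProj P) : (P ∘L C ∘L P) ∘L P = P ∘L C ∘L P := by
  rw [comp_assoc, comp_assoc, hP.1]

lemma isSelfAdjoint_conj (hP : IsOrthProj P) (hC : IsSelfAdjoint C) :
    IsSelfAdjoint (P ∘L C ∘L P) := by
  simpa only [hP.2] using hC.adjoint_conj P

lemma inner_conj_apply_of_mem_range (hP : IsOrthProj P) {v : H} (hv : v ∈ P.range) :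
    ⟪v, (P ∘L C ∘L P) v⟫ = ⟪v, C v⟫ := by
  calc ⟪v, P (C (P v))⟫ = ⟪P v, C (P v)⟫ := (hP.isSelfAdjoint.isSymmetric v _).symm
    _ = ⟪v, C v⟫ := by rw [hP.apply_eq_self_of_mem_range hv]

end IsOrthProj

lemma IsCoerciveOn.conj_of_norm_sub {B : H →L[ℝ] H} (hB : IsCoerciveOn (P ∘L B ∘L P) P.range μ)
    (hP : IsOrthProj P) (B' : H →L[ℝ] H) :
    IsCoerciveOn (P ∘L B' ∘L P) P.range (μ - ‖B' - B‖) := by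
  intro v hv
  have hsplit : ⟪v, B' v⟫ = ⟪v, B v⟫ + ⟪v, (B' - B) v⟫ := by
    rw [sub_apply, inner_sub_right]; ring
  have hdiff : |⟪v, (B' - B) v⟫| ≤ ‖B' - B‖ * ‖v‖ ^ 2 := calc
    _ ≤ ‖v‖ * ‖(B' - B) v‖ := abs_real_inner_le_norm _ _
    _ ≤ ‖v‖ * (‖B' - B‖ * ‖v‖) := by gcongr; exact le_opNorm _ _
    _ = ‖B' - B‖ * ‖v‖ ^ 2 := by ring
  have hBv := hB v hv
  rw [hP.inner_conj_apply_of_mem_range hv] at hBv ⊢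
  linarith [neg_le_of_abs_le hdiff]

lemma IsPseudoinverse.comp_eq_of_ker_le (hpi : IsPseudoinverse A Ap) (hP : IsOrthProj P)
    (hPA : P ∘L A = A) (hAP : A ∘L P = A) (hA : IsSelfAdjoint A)
    (hker : ∀ x, A x = 0 → P x = 0) :
    Ap ∘L A = P ∧ A ∘L Ap = P := by
  obtain ⟨hAApA, -, hAAp, hApA⟩ := hpi
  -- both `P - Ap A` and `P - A Ap` are killed by `A` on the left and fixed by `P`
  constructor
  · have hPQ : P ∘L (Ap ∘L A) = Ap ∘L A := by
      have h := congrArg adjoint (show (Ap ∘L A) ∘L P = Ap ∘L A by rw [comp_assoc, hAP])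
      rwa [adjoint_comp, hP.2, hApA] at h
    refine (sub_eq_zero.mp (eq_zero_of_comp_eq_zero_of_ker_le hker ?_ ?_)).symm
    · rw [comp_sub, hAP, hAApA, sub_self]
    · rw [comp_sub, hP.1, hPQ]
  · have hSA : (P - A ∘L Ap) ∘L A = 0 := by rw [sub_comp, hPA, comp_assoc, hAApA, sub_self]
    refine (sub_eq_zero.mp (eq_zero_of_comp_eq_zero_of_ker_le hker ?_ ?_)).symm
    · have h := congrArg adjoint hSA
      rwa [adjoint_comp, map_sub, hP.2, hAAp, hA.adjoint_eq, map_zero] at h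
    · rw [comp_sub, hP.1, ← comp_assoc, hPA]

lemma IsPseudoinverse.conj_comp_eq_of_isCoerciveOn (hpi : IsPseudoinverse (P ∘L C ∘L P) Ap)
    (hP : IsOrthProj P) (hC : IsSelfAdjoint C) (hcoer : IsCoerciveOn (P ∘L C ∘L P) P.range μ)
    (hμ : 0 < μ) :
    Ap ∘L (P ∘L C ∘L P) = P ∧ (P ∘L C ∘L P) ∘L Ap = P :=
  hpi.comp_eq_of_ker_le hP hP.comp_conj hP.conj_comp (hP.isSelfAdjoint_conj hC)
    fun _ => hcoer.apply_eq_zero hμ hP.conj_comp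

lemma IsPseudoinverse.opNorm_le_inv_of_isCoerciveOn (hpi : IsPseudoinverse A Ap)
    (hP : IsOrthProj P) (hApA : Ap ∘L A = P) (hAAp : A ∘L Ap = P)
    (hcoer : IsCoerciveOn A P.range μ) (hμ : 0 < μ) :
    ‖Ap‖ ≤ μ⁻¹ := by
  have hPAp : P ∘L Ap = Ap := by rw [← hApA, comp_assoc, hpi.2.1]
  refine opNorm_le_bound _ (inv_nonneg.2 hμ.le) fun x => ?_
  have hu : Ap x ∈ P.range := ⟨Ap x, DFunLike.congr_fun hPAp x⟩
  have key : μ * ‖Ap x‖ ^ 2 ≤ ‖Ap x‖ * ‖x‖ := calc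
    μ * ‖Ap x‖ ^ 2 ≤ ⟪Ap x, A (Ap x)⟫ := hcoer _ hu
    _ = ⟪Ap x, P x⟫ := by rw [← comp_apply, hAAp]
    _ ≤ ‖Ap x‖ * ‖P x‖ := real_inner_le_norm _ _
    _ ≤ ‖Ap x‖ * ‖x‖ := by gcongr; simpa using P.le_of_opNorm_le hP.opNorm_le_one x
  rw [inv_mul_eq_div, le_div_iff₀ hμ]
  rcases (norm_nonneg (Ap x)).eq_or_lt with h | h
  · rw [← h]; simp
  · nlinarith

end

theorem stmt_2_general {H : Type*} [NormedAddCommGroup H] [InnerProductSpace ℝ H]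
    [CompleteSpace H]
    (V : Submodule ℝ H)
    (P : H →L[ℝ] H) (hP : IsOrthProj P) (hPV : LinearMap.range (P : H →ₗ[ℝ] H) = V)
    (B B' : H →L[ℝ] H)
    (hB : ContinuousLinearMap.adjoint B = B) (hB' : ContinuousLinearMap.adjoint B' = B')
    (lam : ℝ) (hlam : 0 < lam)
    (hmin : IsSmallestEigenvalueOn (P ∘L B ∘L P) V lam)
    (hnear : ‖B' - B‖ ≤ lam / 2) :
    (∀ Bp', IsPseudoinverse (P ∘L B' ∘L P) Bp' →
      Bp' ∘L (P ∘L B' ∘L P) = P ∧ (P ∘L B' ∘L P) ∘L Bp' = P) ∧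
    (∀ Bp, IsPseudoinverse (P ∘L B ∘L P) Bp →
      ‖P - Bp ∘L (P ∘L B' ∘L P)‖ ≤ 1 / 2) := by
  subst hPV
  have hcoer : IsCoerciveOn (P ∘L B ∘L P) P.range lam := hmin.1
  refine ⟨fun Bp' hpi' => hpi'.conj_comp_eq_of_isCoerciveOn hP hB'
    (hcoer.conj_of_norm_sub hP B') (by linarith), fun Bp hpi => ?_⟩
  obtain ⟨hBpA, hABp⟩ := hpi.conj_comp_eq_of_isCoerciveOn hP hB hcoer hlam
  have hBp := hpi.opNorm_le_inv_of_isCoerciveOn hP hBpA hABp hcoer hlam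
  have hdiff : P - Bp ∘L (P ∘L B' ∘L P) = Bp ∘L P ∘L (B - B') ∘L P := by
    rw [sub_comp, comp_sub, comp_sub, hBpA]
  calc ‖P - Bp ∘L (P ∘L B' ∘L P)‖ = ‖Bp ∘L P ∘L (B - B') ∘L P‖ := by rw [hdiff]
    _ ≤ ‖Bp‖ * (‖P‖ * (‖B - B'‖ * ‖P‖)) :=
      (opNorm_comp_le _ _).trans <| mul_le_mul_of_nonneg_left
        ((opNorm_comp_le _ _).trans <| mul_le_mul_of_nonneg_left (opNorm_comp_le _ _)
          (norm_nonneg _)) (norm_nonneg _)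
    _ ≤ lam⁻¹ * (1 * (lam / 2 * 1)) := by
      gcongr
      exacts [hP.opNorm_le_one, norm_sub_rev B B' ▸ hnear, hP.opNorm_le_one]
    _ = 1 / 2 := by field_simp

theorem stmt_2 {H : Type*} [NormedAddCommGroup H] [InnerProductSpace ℝ H]
    [CompleteSpace H] [TopologicalSpace.SeparableSpace H]
    (V : Submodule ℝ H) [FiniteDimensional ℝ V]
    (P : H →L[ℝ] H) (hP : IsOrthProj P) (hPV : LinearMap.range (P : H →ₗ[ℝ] H) = V)
    (B B' : H →L[ℝ] H)
    (hB : ContinuousLinearMap.adjoint B = B) (hB' : ContinuousLinearMap.adjoint B' = B')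
    (hBpos : ∀ x, 0 ≤ ⟪x, B x⟫) (hB'pos : ∀ x, 0 ≤ ⟪x, B' x⟫)
    (lam : ℝ) (hlam : 0 < lam)
    (hmin : IsSmallestEigenvalueOn (P ∘L B ∘L P) V lam)
    (hnear : ‖B' - B‖ ≤ lam / 2) :
    (∀ Bp', IsPseudoinverse (P ∘L B' ∘L P) Bp' →
      Bp' ∘L (P ∘L B' ∘L P) = P ∧ (P ∘L B' ∘L P) ∘L Bp' = P) ∧
    (∀ Bp, IsPseudoinverse (P ∘L B ∘L P) Bp →
      ‖P - Bp ∘L (P ∘L B' ∘L P)‖ ≤ 1 / 2) :=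
  stmt_2_general V P hP hPV B B' hB hB' lam hlam hmin hnear
end

section
/- Let V be a finite-dimensional subspace of a Hilbert space H with orthogonal projection P, and let B, B' be bounded self-adjoint operators on H such that PBP restricted to V is invertible with smallest nonzero eigenvalue λ > 0. If ‖B' − B‖ ≤ λ/2, then ‖(PB'P)⁺‖ ≤ 2/λ. -/
open ContinuousLinearMap RealInnerProductSpace

/-!
Write `A = PB'P` and `A⁺` for its pseudoinverse. Since `A⁺ = A⁺ A A⁺` and `A⁺A` is self-adjoint,
`A⁺ = A* (A⁺)* A⁺`, so the range of `A⁺` lies in the range of `A = A*`, hence in `V`. On `V` the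
quadratic form of `A` is that of `B'`, which is at least `λ - ‖B' - B‖ ≥ λ/2` times `‖v‖²`.
Since `AA⁺` is an orthogonal projection, `u = A⁺x` satisfies
`(λ/2)‖u‖² ≤ ⟪u, AA⁺x⟫ ≤ ‖u‖‖x‖`, i.e. `‖A⁺x‖ ≤ (2/λ)‖x‖`.
-/

theorem real_inner_apply_le_add_norm_sub_mul_sq {H : Type*} [NormedAddCommGroup H]
    [InnerProductSpace ℝ H] (B B' : H →L[ℝ] H) (v : H) :
    ⟪v, B v⟫ ≤ ⟪v, B' v⟫ + ‖B' - B‖ * ‖v‖ ^ 2 := by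
  have hdiff : ⟪v, (B - B') v⟫ ≤ ‖B' - B‖ * ‖v‖ ^ 2 :=
    calc ⟪v, (B - B') v⟫ ≤ ‖v‖ * ‖(B - B') v‖ := real_inner_le_norm _ _
      _ ≤ ‖v‖ * (‖B - B'‖ * ‖v‖) := by gcongr; exact le_opNorm _ _
      _ = ‖B' - B‖ * ‖v‖ ^ 2 := by rw [norm_sub_rev]; ring
  rw [sub_apply, inner_sub_right] at hdiff
  linarith

section

variable {H : Type*} [NormedAddCommGroup H] [InnerProductSpace ℝ H] [CompleteSpace H]

theorem IsOrthProj.isStarProjection_s3 {P : H →L[ℝ] H} (hP : IsOrthProj P) :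
    IsStarProjection P :=
  ⟨hP.1, hP.2⟩

theorem IsOrthProj.real_inner_comp_comp_apply_of_mem_range {P : H →L[ℝ] H} (hP : IsOrthProj P)
    (B : H →L[ℝ] H) {v : H} (hv : v ∈ LinearMap.range (P : H →ₗ[ℝ] H)) :
    ⟪v, (P ∘L B ∘L P) v⟫ = ⟪v, B v⟫ := by
  obtain ⟨w, rfl⟩ := hv
  have hPP : P (P w) = P w := congr($(hP.1) w)
  have hsymm := hP.isStarProjection_s3.isSelfAdjoint.isSymmetric (P w) (B (P w))
  simp only [ContinuousLinearMap.coe_coe, hPP] at hsymm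
  simpa only [comp_apply, ContinuousLinearMap.coe_coe, hPP] using hsymm.symm

namespace IsPseudoinverse

variable {A Ap : H →L[ℝ] H}

theorem isStarProjection_comp (h : IsPseudoinverse A Ap) : IsStarProjection (A ∘L Ap) where
  isIdempotentElem := by
    change (A ∘L Ap ∘L A) ∘L Ap = A ∘L Ap
    rw [h.1]
  isSelfAdjoint := h.2.2.1

theorem norm_apply_apply_le (h : IsPseudoinverse A Ap) (x : H) : ‖A (Ap x)‖ ≤ ‖x‖ :=
  calc ‖(A ∘L Ap) x‖ ≤ ‖A ∘L Ap‖ * ‖x‖ := le_opNorm _ _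
    _ ≤ 1 * ‖x‖ := by gcongr; exact h.isStarProjection_comp.norm_le
    _ = ‖x‖ := one_mul _

theorem apply_mem_range_adjoint (h : IsPseudoinverse A Ap) (x : H) :
    Ap x ∈ LinearMap.range (adjoint A : H →ₗ[ℝ] H) := by
  refine ⟨adjoint Ap (Ap x), ?_⟩
  calc adjoint A (adjoint Ap (Ap x)) = adjoint (Ap ∘L A) (Ap x) := by rw [adjoint_comp]; rfl
    _ = Ap x := by rw [h.2.2.2]; exact congr($(h.2.1) x)

theorem norm_le_inv_of_coercive (h : IsPseudoinverse A Ap) {c : ℝ} (hc : 0 < c)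
    (hA : ∀ x, c * ‖Ap x‖ ^ 2 ≤ ⟪Ap x, A (Ap x)⟫) : ‖Ap‖ ≤ c⁻¹ := by
  refine opNorm_le_bound _ (by positivity) fun x => ?_
  have key : c * ‖Ap x‖ ^ 2 ≤ ‖x‖ * ‖Ap x‖ :=
    calc c * ‖Ap x‖ ^ 2 ≤ ⟪Ap x, A (Ap x)⟫ := hA x
      _ ≤ ‖Ap x‖ * ‖A (Ap x)‖ := real_inner_le_norm _ _
      _ ≤ ‖Ap x‖ * ‖x‖ := by gcongr; exact h.norm_apply_apply_le x
      _ = ‖x‖ * ‖Ap x‖ := mul_comm _ _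
  rcases (norm_nonneg (Ap x)).eq_or_lt with h0 | hpos
  · rw [← h0]; positivity
  · rw [inv_mul_eq_div, le_div_iff₀ hc]
    nlinarith

end IsPseudoinverse

end

theorem stmt_3_general {H : Type*} [NormedAddCommGroup H] [InnerProductSpace ℝ H]
    [CompleteSpace H]
    (V : Submodule ℝ H)
    (P : H →L[ℝ] H) (hP : IsOrthProj P) (hPV : LinearMap.range (P : H →ₗ[ℝ] H) = V)
    (B B' : H →L[ℝ] H)
    (hB' : ContinuousLinearMap.adjoint B' = B')
    (lam : ℝ) (hlam : 0 < lam)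
    (hmin : IsSmallestEigenvalueOn (P ∘L B ∘L P) V lam)
    (hnear : ‖B' - B‖ ≤ lam / 2)
    (Bp' : H →L[ℝ] H) (hBp' : IsPseudoinverse (P ∘L B' ∘L P) Bp') :
    ‖Bp'‖ ≤ 2 / lam := by
  have hA'sa : adjoint (P ∘L B' ∘L P) = P ∘L B' ∘L P := by
    rw [adjoint_comp, adjoint_comp, hP.2, hB', comp_assoc]
  have hcoer : ∀ x, lam / 2 * ‖Bp' x‖ ^ 2 ≤ ⟪Bp' x, (P ∘L B' ∘L P) (Bp' x)⟫ := by
    intro x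
    have hmem : Bp' x ∈ LinearMap.range (P : H →ₗ[ℝ] H) := by
      obtain ⟨y, hy⟩ := hBp'.apply_mem_range_adjoint x
      rw [hA'sa] at hy
      exact ⟨B' (P y), hy⟩
    have hlow := hmin.1 _ (hPV ▸ hmem)
    have hpert := real_inner_apply_le_add_norm_sub_mul_sq B B' (Bp' x)
    rw [hP.real_inner_comp_comp_apply_of_mem_range _ hmem] at hlow ⊢
    have hsmall := mul_le_mul_of_nonneg_right hnear (sq_nonneg ‖Bp' x‖)
    linarith
  calc ‖Bp'‖ ≤ (lam / 2)⁻¹ := hBp'.norm_le_inv_of_coercive (by positivity) hcoer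
    _ = 2 / lam := inv_div _ _

theorem stmt_3 {H : Type*} [NormedAddCommGroup H] [InnerProductSpace ℝ H]
    [CompleteSpace H] [TopologicalSpace.SeparableSpace H]
    (V : Submodule ℝ H) [FiniteDimensional ℝ V]
    (P : H →L[ℝ] H) (hP : IsOrthProj P) (hPV : LinearMap.range (P : H →ₗ[ℝ] H) = V)
    (B B' : H →L[ℝ] H)
    (hB : ContinuousLinearMap.adjoint B = B) (hB' : ContinuousLinearMap.adjoint B' = B')
    (hBpos : ∀ x, 0 ≤ ⟪x, B x⟫) (hB'pos : ∀ x, 0 ≤ ⟪x, B' x⟫)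
    (lam : ℝ) (hlam : 0 < lam)
    (hmin : IsSmallestEigenvalueOn (P ∘L B ∘L P) V lam)
    (hnear : ‖B' - B‖ ≤ lam / 2)
    (Bp' : H →L[ℝ] H) (hBp' : IsPseudoinverse (P ∘L B' ∘L P) Bp') :
    ‖Bp'‖ ≤ 2 / lam :=
  stmt_3_general V P hP hPV B B' hB' lam hlam hmin hnear Bp' hBp'
end
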